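/- Let C₁ and C₂ be ZMod p-submodules of (Fin k → ZMod p). If there exists a permutation σ of Ω with σ * H_{C₁} * σ⁻¹ = H_{C₂}, then for every natural number w, the number of vectors v ∈ C₁ of Hamming weight w equals the number of vectors v ∈ C₂ of Hamming weight w. -/

import Mathlib

def gperm {p k : ℕ} (v : Fin k → ZMod p) : Equiv.Perm (Fin k × ZMod p) :=
  Equiv.prodShear (Equiv.refl (Fin k)) (fun i => Equiv.addRight (v i))

def Hsub {p k : ℕ} (C : Submodule (ZMod p) (Fin k → ZMod p)) :
    Subgroup (Equiv.Perm (Fin k × ZMod p)) where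
  carrier := {g | ∃ v ∈ C, g = gperm v}
  one_mem' := ⟨0, C.zero_mem, by ext ⟨i, x⟩ <;> simp [gperm]⟩
  mul_mem' := by
    rintro g h ⟨v, hv, rfl⟩ ⟨w, hw, rfl⟩
    refine ⟨v + w, C.add_mem hv hw, ?_⟩
    ext ⟨i, x⟩ <;> simp [gperm] <;> ring
  inv_mem' := by
    rintro g ⟨v, hv, rfl⟩
    refine ⟨-v, C.neg_mem hv, ?_⟩
    have h1 : gperm v * gperm (-v) = 1 := by ext ⟨i, x⟩ <;> simp [gperm]
    exact inv_eq_of_mul_eq_one_right h1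

def affineEquiv {p : ℕ} (a : (ZMod p)ˣ) (b : ZMod p) : Equiv.Perm (ZMod p) where
  toFun x := (a : ZMod p) * x + b
  invFun y := ((a⁻¹ : (ZMod p)ˣ) : ZMod p) * (y - b)
  left_inv x := by simp
  right_inv y := by simp

def sigmaPerm {p k : ℕ} (a : Fin k → (ZMod p)ˣ) (b : Fin k → ZMod p)
    (π : Equiv.Perm (Fin k)) : Equiv.Perm (Fin k × ZMod p) :=
  Equiv.prodShear π (fun i => affineEquiv (a i) (b i))

/-! The permutation `g_v` moves exactly the points `(i, x)` with `v i ≠ 0`, so its support has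
`p · wt(v)` elements. Conjugation preserves support sizes, hence a conjugation carrying `H_{C₁}`
onto `H_{C₂}` matches the codewords of `C₁` and `C₂` weight by weight. -/

lemma gperm_apply {p k : ℕ} (v : Fin k → ZMod p) (i : Fin k) (x : ZMod p) :
    gperm v (i, x) = (i, x + v i) := rfl

lemma gperm_injective {p k : ℕ} : Function.Injective (gperm (p := p) (k := k)) := by
  intro v w h
  funext i
  simpa [gperm_apply] using congrArg (fun g => (g (i, 0)).2) h

lemma support_gperm {p k : ℕ} [NeZero p] (v : Fin k → ZMod p) :
    (gperm v).support = (Finset.univ.filter fun i => v i ≠ 0) ×ˢ Finset.univ := by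
  ext ⟨i, x⟩
  simp [Equiv.Perm.mem_support, gperm_apply]

lemma card_support_gperm {p k : ℕ} [NeZero p] (v : Fin k → ZMod p) :
    (gperm v).support.card = hammingNorm v * p := by
  rw [support_gperm, Finset.card_product, Finset.card_univ, ZMod.card, hammingNorm]

lemma hammingNorm_eq_of_conj_gperm {p k : ℕ} [NeZero p] {σ : Equiv.Perm (Fin k × ZMod p)}
    {v u : Fin k → ZMod p} (h : σ * gperm v * σ⁻¹ = gperm u) :
    hammingNorm v = hammingNorm u := by
  have hcard := Equiv.Perm.card_support_conj (σ := σ) (τ := gperm v)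
  rw [h, card_support_gperm, card_support_gperm] at hcard
  exact (Nat.eq_of_mul_eq_mul_right (NeZero.pos p) hcard).symm

lemma conj_image_gperm_weight {p k : ℕ} [NeZero p] {C₁ C₂ : Submodule (ZMod p) (Fin k → ZMod p)}
    {σ : Equiv.Perm (Fin k × ZMod p)}
    (hσ : (fun g => σ * g * σ⁻¹) '' (Hsub C₁ : Set (Equiv.Perm (Fin k × ZMod p)))
        = (Hsub C₂ : Set (Equiv.Perm (Fin k × ZMod p)))) (w : ℕ) :
    (fun g => σ * g * σ⁻¹) '' (gperm '' {v | v ∈ C₁ ∧ hammingNorm v = w})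
      = gperm '' {v | v ∈ C₂ ∧ hammingNorm v = w} := by
  ext g
  simp only [Set.image_image, Set.mem_image, Set.mem_ofPred_eq, and_assoc]
  constructor
  · rintro ⟨v, hv, rfl, rfl⟩
    obtain ⟨u, hu, hconj⟩ : σ * gperm v * σ⁻¹ ∈ (Hsub C₂ : Set _) := by
      rw [← hσ]; exact ⟨gperm v, ⟨v, hv, rfl⟩, rfl⟩
    exact ⟨u, hu, (hammingNorm_eq_of_conj_gperm hconj).symm, hconj.symm⟩
  · rintro ⟨u, hu, rfl, rfl⟩
    obtain ⟨_, ⟨v, hv, rfl⟩, hconj⟩ : gperm u ∈ (fun g => σ * g * σ⁻¹) '' (Hsub C₁ : Set _) := by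
      rw [hσ]; exact ⟨u, hu, rfl⟩
    exact ⟨v, hv, hammingNorm_eq_of_conj_gperm hconj, hconj⟩

/-- If `H_{C₁}` and `H_{C₂}` are conjugate in `Equiv.Perm Ω`, then `C₁` and `C₂` have the
same weight enumerator. -/
theorem stmt12 {p k : ℕ} (hp : p.Prime)
    (C₁ C₂ : Submodule (ZMod p) (Fin k → ZMod p))
    (σ : Equiv.Perm (Fin k × ZMod p))
    (hσ : (fun g => σ * g * σ⁻¹) '' (Hsub C₁ : Set (Equiv.Perm (Fin k × ZMod p)))
        = (Hsub C₂ : Set (Equiv.Perm (Fin k × ZMod p)))) :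
    ∀ w : ℕ,
      Set.ncard {v : Fin k → ZMod p | v ∈ C₁ ∧ hammingNorm v = w}
        = Set.ncard {v : Fin k → ZMod p | v ∈ C₂ ∧ hammingNorm v = w} := by
  intro w
  have : NeZero p := ⟨hp.ne_zero⟩
  have conj_injective : Function.Injective fun g : Equiv.Perm (Fin k × ZMod p) => σ * g * σ⁻¹ :=
    (MulAut.conj σ).injective
  rw [← Set.ncard_image_of_injective _ gperm_injective,
    ← Set.ncard_image_of_injective _ conj_injective, conj_image_gperm_weight hσ,
    Set.ncard_image_of_injective _ gperm_injective]
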